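/- arXiv:1402.4592 — 4 statements merged into one kernel-verified Lean document; each statement's English description precedes it below -/
import Mathlib

section
/- Let θ : S → T be a premorphism of inverse semigroups. Then for all a ∈ S, θ(a⁻¹) = (θ(a))⁻¹. -/
/-- An inverse semigroup: a semigroup in which every element `a` has a
(unique) inverse `a⁻¹` with `a * a⁻¹ * a = a` and `a⁻¹ * a * a⁻¹ = a⁻¹`. -/
class InverseSemigroup (S : Type*) extends Semigroup S, Inv S where
  mul_inv_mul : ∀ a : S, a * a⁻¹ * a = a
  inv_mul_inv : ∀ a : S, a⁻¹ * a * a⁻¹ = a⁻¹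
  inv_unique : ∀ a b : S, a * b * a = a → b * a * b = b → b = a⁻¹

/-- The natural partial order on an inverse semigroup:
`a ≤ b` iff `a = e * b` for some idempotent `e`. -/
def npo {S : Type*} [InverseSemigroup S] (a b : S) : Prop :=
  ∃ e : S, e * e = e ∧ a = e * b

/-- A premorphism of inverse semigroups: `θ (a * b) ≤ θ a * θ b` in the
natural partial order of the codomain. -/
def IsPremorphism {S T : Type*} [InverseSemigroup S] [InverseSemigroup T]
    (θ : S → T) : Prop :=
  ∀ a b : S, npo (θ (a * b)) (θ a * θ b)

/-! Writing `a = (a * a⁻¹) * a` and applying the premorphism inequality twice gives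
`θ a ≤ θ a * θ a⁻¹ * θ a`. In an inverse semigroup `x ≤ z` forces `x = x * x⁻¹ * z`, which here
collapses to `θ a * θ a⁻¹ * θ a = θ a`; by symmetry also `θ a⁻¹ * θ a * θ a⁻¹ = θ a⁻¹`, so
`θ a⁻¹` is the unique inverse of `θ a`. The one structural fact needed along the way is that
idempotents commute. -/

namespace InverseSemigroup

variable {S : Type*} [InverseSemigroup S]

theorem inv_inv (a : S) : a⁻¹⁻¹ = a :=
  (inv_unique a⁻¹ a (inv_mul_inv a) (mul_inv_mul a)).symm

theorem inv_eq_self_of_isIdempotentElem {e : S} (he : IsIdempotentElem e) : e⁻¹ = e :=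
  (inv_unique e e (by rw [he.eq, he.eq]) (by rw [he.eq, he.eq])).symm

theorem isIdempotentElem_mul_inv_self (a : S) : IsIdempotentElem (a * a⁻¹) := by
  rw [IsIdempotentElem, ← mul_assoc, mul_inv_mul]

theorem isIdempotentElem_mul {e f : S} (he : IsIdempotentElem e) (hf : IsIdempotentElem f) :
    IsIdempotentElem (e * f) := by
  set x := (e * f)⁻¹ with hx_def
  have hxefx : x * (e * f) * x = x := inv_mul_inv (e * f)
  -- `f * x * e` is another inverse of `e * f`, so it equals `x`
  have hx : f * x * e = x := by
    refine inv_unique (e * f) (f * x * e) ?_ ?_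
    · calc e * f * (f * x * e) * (e * f) = e * (f * f) * x * (e * e) * f := by
            simp only [mul_assoc]
        _ = e * f * x * (e * f) := by rw [hf.eq, he.eq]; simp only [mul_assoc]
        _ = e * f := mul_inv_mul (e * f)
    · calc f * x * e * (e * f) * (f * x * e) = f * x * (e * e) * (f * f) * x * e := by
            simp only [mul_assoc]
        _ = f * (x * (e * f) * x) * e := by rw [he.eq, hf.eq]; simp only [mul_assoc]
        _ = f * x * e := by rw [hxefx, mul_assoc]
  have hx_idem : IsIdempotentElem x := by
    calc x * x = f * x * e * (f * x * e) := by rw [hx]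
      _ = f * (x * (e * f) * x) * e := by simp only [mul_assoc]
      _ = x := by rw [hxefx, hx]
  rw [← inv_inv (e * f), ← hx_def, inv_eq_self_of_isIdempotentElem hx_idem]
  exact hx_idem

theorem commute_of_isIdempotentElem {e f : S} (he : IsIdempotentElem e)
    (hf : IsIdempotentElem f) : Commute e f := by
  have hef := isIdempotentElem_mul he hf
  have hfe := isIdempotentElem_mul hf he
  refine (inv_eq_self_of_isIdempotentElem hef).symm.trans (inv_unique _ _ ?_ ?_).symm
  · calc e * f * (f * e) * (e * f) = e * (f * f) * (e * e) * f := by simp only [mul_assoc]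
      _ = e * f * (e * f) := by rw [hf.eq, he.eq]; simp only [mul_assoc]
      _ = e * f := hef.eq
  · calc f * e * (e * f) * (f * e) = f * (e * e) * (f * f) * e := by simp only [mul_assoc]
      _ = f * e * (f * e) := by rw [he.eq, hf.eq]; simp only [mul_assoc]
      _ = f * e := hfe.eq

end InverseSemigroup

open InverseSemigroup

section NaturalPartialOrder

variable {S : Type*} [InverseSemigroup S]

theorem npo_trans {a b c : S} (hab : npo a b) (hbc : npo b c) : npo a c := by
  obtain ⟨e, he, rfl⟩ := hab
  obtain ⟨f, hf, rfl⟩ := hbc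
  exact ⟨e * f, isIdempotentElem_mul he hf, (mul_assoc e f c).symm⟩

theorem npo_mul_right {a b : S} (h : npo a b) (c : S) : npo (a * c) (b * c) := by
  obtain ⟨e, he, rfl⟩ := h
  exact ⟨e, he, mul_assoc e b c⟩

theorem npo.eq_mul_inv_mul {a b : S} (h : npo a b) : a = a * a⁻¹ * b := by
  obtain ⟨e, he : IsIdempotentElem e, hab⟩ := h
  have hea : e * a = a := by rw [hab, ← mul_assoc, he.eq]
  have hcomm : a * a⁻¹ * e = a * a⁻¹ :=
    calc a * a⁻¹ * e = e * (a * a⁻¹) :=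
          (commute_of_isIdempotentElem (isIdempotentElem_mul_inv_self a) he).eq
      _ = a * a⁻¹ := by rw [← mul_assoc, hea]
  calc a = a * a⁻¹ * a := (mul_inv_mul a).symm
    _ = a * a⁻¹ * (e * b) := congrArg (a * a⁻¹ * ·) hab
    _ = a * a⁻¹ * b := by rw [← mul_assoc, hcomm]

end NaturalPartialOrder

namespace IsPremorphism

variable {S T : Type*} [InverseSemigroup S] [InverseSemigroup T] {θ : S → T}

theorem npo_mul_inv_mul (hθ : IsPremorphism θ) (a : S) : npo (θ a) (θ a * θ a⁻¹ * θ a) := by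
  have h := hθ (a * a⁻¹) a
  rw [mul_inv_mul] at h
  exact npo_trans h (npo_mul_right (hθ a a⁻¹) (θ a))

theorem map_mul_inv_mul (hθ : IsPremorphism θ) (a : S) : θ a * θ a⁻¹ * θ a = θ a := by
  symm
  calc θ a = θ a * (θ a)⁻¹ * (θ a * θ a⁻¹ * θ a) := (hθ.npo_mul_inv_mul a).eq_mul_inv_mul
    _ = θ a * (θ a)⁻¹ * θ a * θ a⁻¹ * θ a := by simp only [mul_assoc]
    _ = θ a * θ a⁻¹ * θ a := by rw [mul_inv_mul]

end IsPremorphism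

theorem premorphism_inv {S T : Type*} [InverseSemigroup S] [InverseSemigroup T]
    (θ : S → T) (hθ : IsPremorphism θ) :
    ∀ a : S, θ (a⁻¹) = (θ a)⁻¹ := by
  intro a
  have h := hθ.map_mul_inv_mul a⁻¹
  rw [InverseSemigroup.inv_inv] at h
  exact inv_unique (θ a) (θ a⁻¹) (hθ.map_mul_inv_mul a) h
end

section
/- Let S be an inverse semigroup and let η : S → S be an ordered function that preserves the heap operation (η(a*b⁻¹*c) = η(a)*(η(b))⁻¹*η(c) for all a, b, c ∈ S), and define φ : S → S by φ(a) = η(a)*(η(a⁻¹*a))⁻¹. Then for all s ∈ S one has η(s) = φ(s)*η(s⁻¹*s) and (φ(s))⁻¹*φ(s) = η(s⁻¹*s)*(η(s⁻¹*s))⁻¹. -/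
/-!
Write `e = s⁻¹ * s`. Since `s * e⁻¹ * e = s` and `e * s⁻¹ * s = e`, heap preservation gives
`η s * (η e)⁻¹ * η e = η s` and `η e * (η s)⁻¹ * η s = η e`. In any inverse semigroup these two
absorption identities for `x` and `y` force `(x * y⁻¹)⁻¹ = y * x⁻¹` by uniqueness of inverses,
whence `(x * y⁻¹)⁻¹ * (x * y⁻¹) = y * y⁻¹`.
-/

namespace InverseSemigroup

variable {S : Type*} [InverseSemigroup S]

theorem isIdempotentElem_inv_mul_self (a : S) : IsIdempotentElem (a⁻¹ * a) := by
  rw [IsIdempotentElem, ← mul_assoc, InverseSemigroup.inv_mul_inv]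

theorem mul_inv_mul_inv_mul_self (s : S) : s * (s⁻¹ * s)⁻¹ * (s⁻¹ * s) = s := by
  have he := isIdempotentElem_inv_mul_self s
  rw [inv_eq_self_of_isIdempotentElem he, mul_assoc, he.eq, ← mul_assoc,
    InverseSemigroup.mul_inv_mul]

theorem inv_mul_self_mul_inv_mul_self (s : S) : s⁻¹ * s * s⁻¹ * s = s⁻¹ * s := by
  rw [mul_assoc, (isIdempotentElem_inv_mul_self s).eq]

theorem mul_inv_inv_eq_of_absorb {x y : S} (hx : x * y⁻¹ * y = x) (hy : y * x⁻¹ * x = y) :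
    (x * y⁻¹)⁻¹ = y * x⁻¹ := by
  symm
  apply InverseSemigroup.inv_unique
  · calc x * y⁻¹ * (y * x⁻¹) * (x * y⁻¹) = x * y⁻¹ * y * x⁻¹ * x * y⁻¹ := by
          simp only [mul_assoc]
      _ = x * y⁻¹ := by rw [hx, InverseSemigroup.mul_inv_mul]
  · calc y * x⁻¹ * (x * y⁻¹) * (y * x⁻¹) = y * x⁻¹ * x * y⁻¹ * y * x⁻¹ := by
          simp only [mul_assoc]
      _ = y * x⁻¹ := by rw [hy, InverseSemigroup.mul_inv_mul]

theorem mul_inv_inv_mul_mul_inv_eq_of_absorb {x y : S} (hx : x * y⁻¹ * y = x)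
    (hy : y * x⁻¹ * x = y) : (x * y⁻¹)⁻¹ * (x * y⁻¹) = y * y⁻¹ := by
  rw [mul_inv_inv_eq_of_absorb hx hy, ← mul_assoc, hy]

end InverseSemigroup

theorem heap_preserving_decomposition_general {S : Type*} [InverseSemigroup S]
    (η : S → S)
    (hheap : ∀ a b c : S, η (a * b⁻¹ * c) = η a * (η b)⁻¹ * η c) :
    ∀ s : S,
      η s = (η s * (η (s⁻¹ * s))⁻¹) * η (s⁻¹ * s) ∧
      (η s * (η (s⁻¹ * s))⁻¹)⁻¹ * (η s * (η (s⁻¹ * s))⁻¹) =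
        η (s⁻¹ * s) * (η (s⁻¹ * s))⁻¹ := by
  intro s
  have hs : η s * (η (s⁻¹ * s))⁻¹ * η (s⁻¹ * s) = η s := by
    rw [← hheap, InverseSemigroup.mul_inv_mul_inv_mul_self]
  have he : η (s⁻¹ * s) * (η s)⁻¹ * η s = η (s⁻¹ * s) := by
    rw [← hheap, InverseSemigroup.inv_mul_self_mul_inv_mul_self]
  exact ⟨hs.symm, InverseSemigroup.mul_inv_inv_mul_mul_inv_eq_of_absorb hs he⟩

theorem heap_preserving_decomposition {S : Type*} [InverseSemigroup S]
    (η : S → S)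
    (hord : ∀ a b : S, npo a b → npo (η a) (η b))
    (hheap : ∀ a b c : S, η (a * b⁻¹ * c) = η a * (η b)⁻¹ * η c) :
    ∀ s : S,
      η s = (η s * (η (s⁻¹ * s))⁻¹) * η (s⁻¹ * s) ∧
      (η s * (η (s⁻¹ * s))⁻¹)⁻¹ * (η s * (η (s⁻¹ * s))⁻¹) =
        η (s⁻¹ * s) * (η (s⁻¹ * s))⁻¹ :=
  heap_preserving_decomposition_general η hheap
end

section
/- Let A be a type, let φ : FreeMonoid A → FreeMonoid A be a function, and let σ be a monoid endomorphism of FreeMonoid A such that φ(p*u) = σ(p)*φ(u) for all p, u ∈ FreeMonoid A. Suppose there exists w ∈ FreeMonoid A such that every value of φ is a suffix of w (for all u there exists q with w = q*φ(u)). Then φ is constant: φ(u) = φ(1) for all u ∈ FreeMonoid A (equivalently, σ(u) = 1 for all u). -/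
/-!
Taking `u = 1` in the hypothesis gives `φ p = σ p * φ 1`. Applied to `p = uⁿ`, the word
`(σ u)ⁿ` is a prefix of a suffix of `w`, so `n * |σ u| ≤ |w|` for every `n`, which forces
`σ u = 1`; then `φ u = σ u * φ 1 = φ 1`.
-/

namespace FreeMonoid

variable {α : Type*}

theorem length_pow (x : FreeMonoid α) (n : ℕ) : (x ^ n).length = n * x.length := by
  induction n with
  | zero => rw [pow_zero, zero_mul, length_one]
  | succ n ih => rw [pow_succ, length_mul, ih, Nat.succ_mul]

theorem length_le_of_eq_mul {w q x : FreeMonoid α} (h : w = q * x) : x.length ≤ w.length := by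
  rw [h, length_mul]
  exact Nat.le_add_left _ _

theorem eq_one_of_forall_length_pow_le {x : FreeMonoid α} {C : ℕ}
    (h : ∀ n, (x ^ n).length ≤ C) : x = 1 := by
  rw [← length_eq_zero]
  by_contra hx
  have hC := h (C + 1)
  rw [length_pow] at hC
  nlinarith [Nat.one_le_iff_ne_zero.mpr hx]

end FreeMonoid

open FreeMonoid

/-- If `φ` is a map of the free monoid with `φ (p * u) = σ p * φ u` for an
endomorphism `σ`, and all values of `φ` are suffixes of a fixed word `w`,
then `φ` is constant (equivalently `σ` is trivial). -/
theorem bounded_suffix_preserving_is_constant {A : Type*}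
    (φ : FreeMonoid A → FreeMonoid A) (σ : FreeMonoid A →* FreeMonoid A)
    (hφ : ∀ p u : FreeMonoid A, φ (p * u) = σ p * φ u)
    (hw : ∃ w : FreeMonoid A, ∀ u : FreeMonoid A, ∃ q : FreeMonoid A, w = q * φ u) :
    (∀ u : FreeMonoid A, φ u = φ 1) ∧ (∀ u : FreeMonoid A, σ u = 1) := by
  obtain ⟨w, hw⟩ := hw
  have hφ_one (p : FreeMonoid A) : φ p = σ p * φ 1 := by rw [← hφ, mul_one]
  have hσ (u : FreeMonoid A) : σ u = 1 := by
    refine eq_one_of_forall_length_pow_le (C := w.length) fun n => ?_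
    obtain ⟨q, hq⟩ := hw (u ^ n)
    calc (σ u ^ n).length
        ≤ (σ (u ^ n) * φ 1).length := by rw [map_pow, length_mul]; exact Nat.le_add_right _ _
      _ = (φ (u ^ n)).length := by rw [← hφ_one]
      _ ≤ w.length := length_le_of_eq_mul hq
  exact ⟨fun u => by rw [hφ_one, hσ, one_mul], hσ⟩
end

section
/- Let C be a connected groupoid (a groupoid in which for any two objects x, y there is an arrow x ⟶ y), fix an object x₀, and let L be the group of arrows x₀ ⟶ x₀ under composition. A flow on C is a function τ assigning to each object x an arrow τ(x) whose source is x; flows form a monoid Φ(C) under the composition (τ ⋆ σ)(x) = τ(x) ≫ σ(t(τ(x))), where t denotes the target of an arrow, with identity the flow x ↦ id_x. Then there is a bijection F from Φ(C) to (obj C → L) × (obj C → obj C) which sends the identity flow to (the constant function 1, the identity map) and satisfies: if F(τ) = (λ₁, θ₁) and F(σ) = (λ₂, θ₂), then F(τ ⋆ σ) = (x ↦ λ₁(x) * λ₂(θ₁(x)), x ↦ θ₂(θ₁(x))). That is, the flow monoid of a connected groupoid with local group L at x₀ is isomorphic to the wreath product L ≀ T(obj C) of L with the full transformation monoid on the objects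 of C. -/
open CategoryTheory

/-- A flow on a groupoid: an assignment to each object `x` of an arrow with
source `x` (encoded as a target together with an arrow to it). -/
def GpdFlow (C : Type*) [Groupoid C] :=
  ∀ x : C, Σ y : C, x ⟶ y

/-- Composition of flows: `(τ ⋆ σ)(x) = τ(x) ≫ σ(t(τ(x)))`. -/
def GpdFlow.comp {C : Type*} [Groupoid C] (τ σ : GpdFlow C) : GpdFlow C :=
  fun x => ⟨(σ (τ x).1).1, (τ x).2 ≫ (σ (τ x).1).2⟩

/-- The identity flow `x ↦ id_x`. -/
def GpdFlow.id (C : Type*) [Groupoid C] : GpdFlow C :=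
  fun x => ⟨x, 𝟙 x⟩

/-!
In a connected groupoid choose isomorphisms `e x : x ≅ x₀`. An arrow `f : x ⟶ y` is then
determined by its target `y` and the loop `(e x)⁻¹ ≫ f ≫ e y` at `x₀`. Conjugation telescopes,
`(e x)⁻¹ ≫ f ≫ g ≫ e z = ((e x)⁻¹ ≫ f ≫ e y) ≫ ((e y)⁻¹ ≫ g ≫ e z)`, and the vertex group
`x₀ ⟶ x₀` multiplies in diagrammatic order (unlike `End x₀`), so composition of flows becomes
the wreath product multiplication.
-/

def sigmaHomEquivOfIsoBase {C : Type*} [Category C] {x₀ : C} (e : ∀ x : C, x ≅ x₀) (x : C) :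
    (Σ y : C, x ⟶ y) ≃ (x₀ ⟶ x₀) × C :=
  (Equiv.sigmaCongrRight fun y => (e x).homCongr (e y)).trans <|
    (Equiv.sigmaEquivProd C (x₀ ⟶ x₀)).trans (Equiv.prodComm C (x₀ ⟶ x₀))

namespace GpdFlow

variable {C : Type*} [Groupoid C] {x₀ : C} (e : ∀ x : C, x ≅ x₀)

def wreathEquiv : GpdFlow C ≃ (C → (x₀ ⟶ x₀)) × (C → C) :=
  (Equiv.piCongrRight (sigmaHomEquivOfIsoBase e)).trans (Equiv.arrowProdEquivProdArrow C _ _)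

theorem wreathEquiv_apply (τ : GpdFlow C) :
    wreathEquiv e τ = (fun x => (e x).homCongr (e (τ x).1) (τ x).2, fun x => (τ x).1) :=
  rfl

theorem wreathEquiv_id : wreathEquiv e (GpdFlow.id C) = (fun _ => 1, fun x => x) := by
  refine Prod.ext (funext fun x => ?_) rfl
  show (e x).inv ≫ 𝟙 x ≫ (e x).hom = 𝟙 x₀
  simp

theorem wreathEquiv_comp (τ σ : GpdFlow C) :
    wreathEquiv e (GpdFlow.comp τ σ) =
      (fun x => (wreathEquiv e τ).1 x * (wreathEquiv e σ).1 ((wreathEquiv e τ).2 x),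
       fun x => (wreathEquiv e σ).2 ((wreathEquiv e τ).2 x)) := by
  simp only [wreathEquiv_apply, GpdFlow.comp, Groupoid.vertexGroup_mul]
  exact Prod.ext (funext fun x => Iso.homCongr_comp _ _ _ _ _) rfl

end GpdFlow

/-- The flow monoid of a connected groupoid `C` with local (vertex) group
`L = (x₀ ⟶ x₀)` is isomorphic to the wreath product `L ≀ T(obj C)`: there is
a bijection from flows to pairs `(λ, θ)` with `λ : obj C → L` and
`θ : obj C → obj C`, sending the identity flow to the identity pair and
transporting flow composition to the wreath product multiplication
`(λ₁,θ₁)(λ₂,θ₂) = (x ↦ λ₁ x * λ₂ (θ₁ x), θ₁ followed by θ₂)`. -/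
theorem flow_monoid_of_connected_groupoid {C : Type*} [Groupoid C]
    (hconn : ∀ x y : C, Nonempty (x ⟶ y)) (x₀ : C) :
    ∃ F : GpdFlow C ≃ (C → (x₀ ⟶ x₀)) × (C → C),
      F (GpdFlow.id C) = (fun _ => 1, fun x => x) ∧
      ∀ τ σ : GpdFlow C,
        F (GpdFlow.comp τ σ) =
          (fun x => (F τ).1 x * (F σ).1 ((F τ).2 x),
           fun x => (F σ).2 ((F τ).2 x)) := by
  let e : ∀ x : C, x ≅ x₀ := fun x => (Groupoid.isoEquivHom x x₀).symm (hconn x x₀).some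
  exact ⟨GpdFlow.wreathEquiv e, GpdFlow.wreathEquiv_id e, GpdFlow.wreathEquiv_comp e⟩
end
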